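/- With the construction below: if there exists an index j ∈ {1,…,n} with α_j = β_j = 1, then ED(x̃1 ∘ x̃2, ỹ) ≤ 9n − 3. -/

import Mathlib

open List

/-- The cost structure of the (removed) Mathlib `Levenshtein.Cost`. -/
structure Levenshtein.Cost (α β δ : Type*) where
  delete : α → δ
  insert : β → δ
  substitute : α → β → δ

/-- The (removed) Mathlib `Levenshtein.defaultCost`: unit costs. -/
def Levenshtein.defaultCost {α : Type*} [DecidableEq α] : Levenshtein.Cost α α ℕ where
  delete _ := 1
  insert _ := 1
  substitute a b := if a = b then 0 else 1

/-- The (removed) Mathlib `levenshtein`, by its defining recursion. -/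
def levenshtein {α β δ : Type*} [AddZeroClass δ] [Min δ] (C : Levenshtein.Cost α β δ) :
    List α → List β → δ
  | [], [] => 0
  | [], y :: ys => C.insert y + levenshtein C [] ys
  | x :: xs, [] => C.delete x + levenshtein C xs []
  | x :: xs, y :: ys =>
    min (C.delete x + levenshtein C xs (y :: ys))
      (min (C.insert y + levenshtein C (x :: xs) ys) (C.substitute x y + levenshtein C xs ys))

/-- Edit distance: minimum number of single-symbol insertions, deletions and
substitutions needed to transform `u` into `v` (Levenshtein distance with unit costs). -/
def ED {α : Type*} [DecidableEq α] (u v : List α) : ℕ :=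
  levenshtein Levenshtein.defaultCost u v

/- The alphabet `{1,…,16n} ∪ {a}` is modelled inside `ℕ`, with the special symbol
`a := 0` (distinct from all the integer symbols).  Indices of `α, β ∈ {0,1}^n` are
`0`-based. -/

/-- `α' ∈ {0,1}^{2n}` (0-based): `α'_{2j−1} = α_j`, `α'_{2j} = 1 − α_j`. -/
def alphaP (a : ℕ → Bool) (j : ℕ) : Bool :=
  if j % 2 = 0 then a (j / 2) else !a (j / 2)

/-- `β' ∈ {0,1}^{2n}` (0-based): `β'_{2j−1} = 1 − β_j`, `β'_{2j} = β_j`. -/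
def betaP (b : ℕ → Bool) (j : ℕ) : Bool :=
  if j % 2 = 0 then !b (j / 2) else b (j / 2)

/-- `x1 ∈ Σ^{4n}` : for `j ∈ {1,…,2n}`, the `(2j−1)`-th symbol is `3j−2` and the `(2j)`-th
symbol is `3j−1` if `α'_j = 1`, and `a` (here `0`) otherwise. -/
def x1 (n : ℕ) (a : ℕ → Bool) : List ℕ :=
  ((List.range (2 * n)).map fun j =>
    [3 * (j + 1) - 2, if alphaP a j then 3 * (j + 1) - 1 else 0]).flatten

/-- `x2 ∈ Σ^{4n}` : for `j ∈ {1,…,2n}`, the `(2j−1)`-th symbol is `3j−1` if `β'_j = 1`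
(and `a`, here `0`, otherwise), and the `(2j)`-th symbol is `3j`. -/
def x2 (n : ℕ) (b : ℕ → Bool) : List ℕ :=
  ((List.range (2 * n)).map fun j =>
    [if betaP b j then 3 * (j + 1) - 1 else 0, 3 * (j + 1)]).flatten

/-- `z = (6n+1, 6n+2, …, 16n)`. -/
def zstr (n : ℕ) : List ℕ := List.range' (6 * n + 1) (10 * n)

/-- `ỹ = (1, 2, …, 16n) ∘ a^{2n}` (with `a := 0`). -/
def ytil (n : ℕ) : List ℕ := List.range' 1 (16 * n) ++ List.replicate (2 * n) 0

/-!
Bit `i` of `α` occupies four symbols of `x1`, which edit into the block `6i+1, …, 6i+6` of `ỹ`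
at cost 3 whatever the bit is; the same holds for `β` and `x2`. Write `n = j + 1 + m` with
`α_j = β_j = 1`. Then `x1` continues after its first `j` bits with `6j+1, 6j+2`, and `x2` has
`6j+5, 6j+6` right after the first symbols of its bit `j`. Align the first `j` bits of `x1` and
the last `m` bits of `x2` blockwise (cost `3j + 3m`), match these two pairs exactly, substitute
and delete the `4n` symbols between them onto `6j+3, 6j+4` (cost `4n`), match `z` with itself
and insert `a^{2n}` (cost `2n`): in total `3(n - 1) + 6n = 9n - 3`.
-/

section EditDistance

variable {α : Type*} [DecidableEq α]

lemma ED_nil_left (v : List α) : ED [] v = v.length := by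
  induction v with
  | nil => rw [ED, levenshtein]; rfl
  | cons y v ih => rw [ED, levenshtein, ← ED, ih, length_cons, Nat.add_comm]; rfl

lemma ED_nil_right (u : List α) : ED u [] = u.length := by
  induction u with
  | nil => rw [ED, levenshtein]; rfl
  | cons x u ih => rw [ED, levenshtein, ← ED, ih, length_cons, Nat.add_comm]; rfl

lemma ED_cons_cons (x y : α) (u v : List α) :
    ED (x :: u) (y :: v) =
      min (1 + ED u (y :: v)) (min (1 + ED (x :: u) v) ((if x = y then 0 else 1) + ED u v)) := by
  rw [ED, levenshtein]; rfl

lemma ED_cons_left_le (x : α) (u v : List α) : ED (x :: u) v ≤ ED u v + 1 := by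
  cases v with
  | nil => simp [ED_nil_right]
  | cons y v => rw [ED_cons_cons]; omega

lemma ED_cons_right_le (u : List α) (y : α) (v : List α) : ED u (y :: v) ≤ ED u v + 1 := by
  cases u with
  | nil => simp [ED_nil_left]
  | cons x u => rw [ED_cons_cons]; omega

lemma ED_cons_cons_le (x y : α) (u v : List α) : ED (x :: u) (y :: v) ≤ ED u v + 1 := by
  rw [ED_cons_cons]; split <;> omega

lemma ED_cons_cons_self_le (x : α) (u v : List α) : ED (x :: u) (x :: v) ≤ ED u v := by
  rw [ED_cons_cons]; simp

@[simp] lemma ED_self (u : List α) : ED u u = 0 := by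
  induction u with
  | nil => simp [ED_nil_left]
  | cons x u ih => simpa [ih] using ED_cons_cons_self_le x u u

lemma ED_le_max_length (u v : List α) : ED u v ≤ max u.length v.length := by
  induction u generalizing v with
  | nil => simp [ED_nil_left]
  | cons x u ih =>
    cases v with
    | nil => simp [ED_nil_right]
    | cons y v => have := ED_cons_cons_le x y u v; have := ih v; simp only [length_cons]; omega

lemma ED_append_le (u₁ u₂ v₁ v₂ : List α) :
    ED (u₁ ++ u₂) (v₁ ++ v₂) ≤ ED u₁ v₁ + ED u₂ v₂ := by
  induction u₁ generalizing v₁ with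
  | nil =>
    induction v₁ with
    | nil => simp
    | cons y v₁ ih =>
      have := ED_cons_right_le ([] ++ u₂) y (v₁ ++ v₂)
      simp only [ED_nil_left, length_cons, cons_append] at ih this ⊢
      omega
  | cons x u₁ ihu =>
    induction v₁ with
    | nil =>
      have := ED_cons_left_le x (u₁ ++ u₂) ([] ++ v₂)
      have := ihu []
      simp only [ED_nil_right, length_cons, cons_append] at this ⊢
      omega
    | cons y v₁ ihv =>
      have hdel := ED_cons_left_le x (u₁ ++ u₂) (y :: v₁ ++ v₂)
      have hins := ED_cons_right_le (x :: u₁ ++ u₂) y (v₁ ++ v₂)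
      have hsub := ihu v₁
      have := ihu (y :: v₁)
      simp only [cons_append] at *
      rw [ED_cons_cons x y u₁ v₁]
      split_ifs with hxy
      · subst hxy
        have := ED_cons_cons_self_le x (u₁ ++ u₂) (v₁ ++ v₂)
        omega
      · have := ED_cons_cons_le x y (u₁ ++ u₂) (v₁ ++ v₂)
        omega

lemma ED_flatten_le (ps : List (List α × List α)) :
    ED (ps.map Prod.fst).flatten (ps.map Prod.snd).flatten ≤ (ps.map fun p => ED p.1 p.2).sum := by
  induction ps with
  | nil => simp
  | cons p ps ih => simpa using (ED_append_le _ _ _ _).trans (Nat.add_le_add_left ih _)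

lemma ED_flatten_map_le {ι : Type*} (f g : ι → List α) (l : List ι) {c : ℕ}
    (h : ∀ i ∈ l, ED (f i) (g i) ≤ c) :
    ED (l.map f).flatten (l.map g).flatten ≤ c * l.length := by
  simpa [Function.comp_def, mul_comm] using (ED_flatten_le (l.map fun i => (f i, g i))).trans
    (List.sum_le_card_nsmul _ c (by simpa using h))

end EditDistance

def x1Block (bit : Bool) (i : ℕ) : List ℕ :=
  [6 * i + 1, if bit then 6 * i + 2 else 0, 6 * i + 4, if bit then 0 else 6 * i + 5]

def x2Block (bit : Bool) (i : ℕ) : List ℕ :=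
  [if bit then 0 else 6 * i + 2, 6 * i + 3, if bit then 6 * i + 5 else 0, 6 * i + 6]

@[simp] lemma length_x1Block (bit : Bool) (i : ℕ) : (x1Block bit i).length = 4 := rfl

@[simp] lemma length_x2Block (bit : Bool) (i : ℕ) : (x2Block bit i).length = 4 := rfl

def yBlock (i : ℕ) : List ℕ := range' (6 * i + 1) 6

lemma x1_eq_flatten_x1Block (n : ℕ) (a : ℕ → Bool) :
    x1 n a = ((range n).map fun i => x1Block (a i) i).flatten := by
  induction n with
  | zero => rfl
  | succ n ih =>
    rw [range_succ, map_append, flatten_append, ← ih]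
    simp only [x1, show 2 * (n + 1) = 2 * n + 1 + 1 by ring, range_succ, map_append, flatten_append,
      append_assoc]
    have : (2 * n + 1) / 2 = n := by omega
    cases h : a n <;> simp [alphaP, x1Block, h, this] <;> omega

lemma x2_eq_flatten_x2Block (n : ℕ) (b : ℕ → Bool) :
    x2 n b = ((range n).map fun i => x2Block (b i) i).flatten := by
  induction n with
  | zero => rfl
  | succ n ih =>
    rw [range_succ, map_append, flatten_append, ← ih]
    simp only [x2, show 2 * (n + 1) = 2 * n + 1 + 1 by ring, range_succ, map_append, flatten_append,
      append_assoc]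
    have : (2 * n + 1) / 2 = n := by omega
    cases h : b n <;> simp [betaP, x2Block, h, this] <;> omega

lemma ytil_eq (n : ℕ) :
    ytil n = ((range n).map yBlock).flatten ++ zstr n ++ replicate (2 * n) 0 := by
  have hprefix : range' 1 (6 * n) = ((range n).map yBlock).flatten := by
    induction n with
    | zero => rfl
    | succ n ih =>
      rw [range_succ, map_append, flatten_append, ← ih, mul_add_one, ← range'_append_1, add_comm 1]
      simp [yBlock]
  rw [ytil, zstr, ← hprefix, add_comm _ 1, range'_append_1, show 6 * n + 10 * n = 16 * n by ring]

lemma ED_x1Block_le (bit : Bool) (i : ℕ) : ED (x1Block bit i) (yBlock i) ≤ 3 := by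
  cases bit <;> simp [ED_cons_cons, ED_nil_left, ED_nil_right, x1Block, yBlock, range'_succ]

lemma ED_x2Block_le (bit : Bool) (i : ℕ) : ED (x2Block bit i) (yBlock i) ≤ 3 := by
  cases bit <;> simp [ED_cons_cons, ED_nil_left, ED_nil_right, x2Block, yBlock, range'_succ]

lemma flatten_map_range_eq {α : Type*} (f : ℕ → List α) (j m : ℕ) :
    ((range (j + 1 + m)).map f).flatten =
      ((range j).map f).flatten ++ f j ++ ((range' (j + 1) m).map f).flatten := by
  rw [range_eq_range', range_eq_range', ← range'_append_1, ← range'_append_1]; simp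

section Alignment

variable (a b : ℕ → Bool) (j m : ℕ)

def alignment : List (List ℕ × List ℕ) :=
  [(((range j).map fun i => x1Block (a i) i).flatten, ((range j).map yBlock).flatten),
   ([6 * j + 1, 6 * j + 2], [6 * j + 1, 6 * j + 2]),
   ([6 * j + 4, 0] ++ ((range' (j + 1) m).map fun i => x1Block (a i) i).flatten ++
      ((range j).map fun i => x2Block (b i) i).flatten ++ [0, 6 * j + 3],
    [6 * j + 3, 6 * j + 4]),
   ([6 * j + 5, 6 * j + 6], [6 * j + 5, 6 * j + 6]),
   (((range' (j + 1) m).map fun i => x2Block (b i) i).flatten,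
    ((range' (j + 1) m).map yBlock).flatten),
   (zstr (j + 1 + m), zstr (j + 1 + m)),
   ([], replicate (2 * (j + 1 + m)) 0)]

lemma flatten_map_fst_alignment (ha : a j = true) (hb : b j = true) :
    ((alignment a b j m).map Prod.fst).flatten =
      x1 (j + 1 + m) a ++ (x2 (j + 1 + m) b ++ zstr (j + 1 + m)) := by
  rw [x1_eq_flatten_x1Block, x2_eq_flatten_x2Block, flatten_map_range_eq, flatten_map_range_eq]
  simp [alignment, x1Block, x2Block, ha, hb]

lemma flatten_map_snd_alignment :
    ((alignment a b j m).map Prod.snd).flatten = ytil (j + 1 + m) := by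
  rw [ytil_eq, flatten_map_range_eq]
  simp [alignment, yBlock, range'_succ]

lemma sum_ED_alignment_le :
    ((alignment a b j m).map fun p => ED p.1 p.2).sum ≤ 9 * (j + 1 + m) - 3 := by
  have hpre := ED_flatten_map_le _ yBlock (range j) fun i _ => ED_x1Block_le (a i) i
  have hpost := ED_flatten_map_le _ yBlock (range' (j + 1) m) fun i _ => ED_x2Block_le (b i) i
  simp only [alignment, map_cons, map_nil, sum_cons, sum_nil, ED_self, ED_nil_left]
  grw [hpre, hpost, ED_le_max_length (_ ++ _ ++ _ ++ _)]
  simp [Function.comp_def]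
  omega

end Alignment

theorem stmt17_general (n : ℕ) (a b : ℕ → Bool)
    (h : ∃ j < n, a j = true ∧ b j = true) :
    ED (x1 n a ++ (x2 n b ++ zstr n)) (ytil n) ≤ 9 * n - 3 := by
  obtain ⟨j, hj, ha, hb⟩ := h
  obtain ⟨m, rfl⟩ : ∃ m, n = j + 1 + m := ⟨n - j - 1, by omega⟩
  rw [← flatten_map_fst_alignment a b j m ha hb, ← flatten_map_snd_alignment a b]
  exact (ED_flatten_le _).trans (sum_ED_alignment_le a b j m)

/-- With `x̃1 = x1` and `x̃2 = x2 ∘ z`: if there exists an index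
`j ∈ {1,…,n}` with `α_j = β_j = 1`, then `ED(x̃1 ∘ x̃2, ỹ) ≤ 9n − 3`. -/
theorem stmt17 (n : ℕ) (hn : 0 < n) (a b : ℕ → Bool)
    (h : ∃ j < n, a j = true ∧ b j = true) :
    ED (x1 n a ++ (x2 n b ++ zstr n)) (ytil n) ≤ 9 * n - 3 :=
  stmt17_general n a b h
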